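/- Let (b_n) be a nondecreasing sequence of integers with b_n ≥ 2 and b_n → ∞, let X = ∏_n ℤ(b_n), let u_n be the character of X given by u_n(ω) = exp(2πi a_n / b_n) for ω = (a_n) ∈ X, and let G_u = s_u(X) = {ω ∈ X : u_n(ω) → 1} be equipped with the metric ρ(x, y) = d(x, y) + sup_n |u_n(x) − u_n(y)|, where d is the standard metric of X. Then the direct sum G = ⨁_n ℤ(b_n) (the subgroup of X consisting of finitely supported sequences) is dense in (G_u, ρ). -/

import Mathlib

/-! Truncating `ω ∈ s_u(X)` at a large index `N` gives a finitely supported `g` that agrees with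
`ω` below `N`, so `d(ω, g) ≤ 2⁻ᴺ`, while `|u_n(ω) − u_n(g)|` vanishes for `n < N` and equals
`|u_n(ω) − 1|` for `n ≥ N`, which is small because `u_n(ω) → 1`. -/

open Filter Topology

/-- The value at `ω ∈ X = ∏ n, ℤ(b n)` of the character given by the generator of the `n`-th
summand of `⨁ n, ℤ(b n)`: `u_n(ω) = exp(2πi a_n / b_n)` where `a_n = (ω n).val`. -/
noncomputable def prodChar (b : ℕ → ℕ) (m : ℕ) (ω : (n : ℕ) → ZMod (b n)) : ℂ :=
  Complex.exp (2 * Real.pi * Complex.I * ((ω m).val : ℂ) / (b m : ℂ))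

/-- The standard metric of `X = ∏ n, ℤ(b n)`: `d(x, y) = 2⁻ⁿ` where `n` is the first index
at which the coordinates of `x` and `y` differ (and `d(x, x) = 0`). -/
noncomputable def prodStdDist (b : ℕ → ℕ) (x y : (n : ℕ) → ZMod (b n)) : ℝ :=
  open scoped Classical in
  if x = y then 0 else (2 : ℝ)⁻¹ ^ sInf {n : ℕ | x n ≠ y n}

/-- The subgroup `s_u(X) = {ω : u_n(ω) → 1}` of `X = ∏ n, ℤ(b n)`. -/
def sUX (b : ℕ → ℕ) : Set ((n : ℕ) → ZMod (b n)) :=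
  {ω | Tendsto (fun n => prodChar b n ω) atTop (𝓝 1)}

/-- The Polish group metric `ρ(x, y) = d(x, y) + sup_n |u_n(x) − u_n(y)|` on `s_u(X)`. -/
noncomputable def prodRho (b : ℕ → ℕ) (x y : (n : ℕ) → ZMod (b n)) : ℝ :=
  prodStdDist b x y + ⨆ n : ℕ, ‖prodChar b n x - prodChar b n y‖

def truncate {b : ℕ → ℕ} (N : ℕ) (ω : (n : ℕ) → ZMod (b n)) : (n : ℕ) → ZMod (b n) :=
  fun n => if n < N then ω n else 0

section Truncate

variable {b : ℕ → ℕ} (N : ℕ) (ω : (n : ℕ) → ZMod (b n))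

theorem truncate_of_lt {n : ℕ} (hn : n < N) : truncate N ω n = ω n := if_pos hn

theorem truncate_of_le {n : ℕ} (hn : N ≤ n) : truncate N ω n = 0 := if_neg hn.not_gt

theorem finite_support_truncate : {n : ℕ | truncate N ω n ≠ 0}.Finite :=
  (Set.finite_Iio N).subset fun n hn => by
    by_contra hle
    exact hn (truncate_of_le N ω (not_lt.mp hle))

end Truncate

theorem prodChar_of_eq_zero (b : ℕ → ℕ) {n : ℕ} {ω : (n : ℕ) → ZMod (b n)} (hω : ω n = 0) :
    prodChar b n ω = 1 := by
  simp [prodChar, hω]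

theorem prodStdDist_le_of_forall_lt_eq (b : ℕ → ℕ) {N : ℕ} {x y : (n : ℕ) → ZMod (b n)}
    (hxy : ∀ n < N, x n = y n) : prodStdDist b x y ≤ (2 : ℝ)⁻¹ ^ N := by
  unfold prodStdDist
  split_ifs with h
  · positivity
  · have hne : {n : ℕ | x n ≠ y n}.Nonempty := by
      by_contra hempty
      exact h (funext fun n => by_contra fun hn => hempty ⟨n, hn⟩)
    have hN : N ≤ sInf {n : ℕ | x n ≠ y n} :=
      le_csInf hne fun n hn => not_lt.mp fun hlt => hn (hxy n hlt)
    exact pow_le_pow_of_le_one (by norm_num) (by norm_num) hN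

theorem iSup_norm_prodChar_sub_truncate_le (b : ℕ → ℕ) {N : ℕ} {ω : (n : ℕ) → ZMod (b n)}
    {δ : ℝ} (hδ : 0 ≤ δ) (htail : ∀ n ≥ N, dist (prodChar b n ω) 1 ≤ δ) :
    ⨆ n : ℕ, ‖prodChar b n ω - prodChar b n (truncate N ω)‖ ≤ δ := by
  refine ciSup_le fun n => ?_
  rcases lt_or_ge n N with hn | hn
  · simp [prodChar, truncate_of_lt N ω hn, hδ]
  · rw [prodChar_of_eq_zero b (truncate_of_le N ω hn), ← dist_eq_norm]
    exact htail n hn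

theorem directSum_dense_in_Gu_general
    (b : ℕ → ℕ) :
    ∀ ω ∈ sUX b, ∀ ε > (0 : ℝ), ∃ g : (n : ℕ) → ZMod (b n),
      {n : ℕ | g n ≠ 0}.Finite ∧ prodRho b ω g < ε := by
  intro ω hω ε hε
  obtain ⟨N₁, hN₁⟩ := exists_pow_lt_of_lt_one (half_pos hε) (by norm_num : (2 : ℝ)⁻¹ < 1)
  obtain ⟨N₂, hN₂⟩ : ∃ N₂, ∀ n ≥ N₂, dist (prodChar b n ω) 1 < ε / 4 :=
    (Metric.tendsto_atTop.mp hω) (ε / 4) (by positivity)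
  set N := max N₁ N₂
  refine ⟨truncate N ω, finite_support_truncate N ω, ?_⟩
  have hd : prodStdDist b ω (truncate N ω) < ε / 2 :=
    calc prodStdDist b ω (truncate N ω)
        ≤ (2 : ℝ)⁻¹ ^ N :=
          prodStdDist_le_of_forall_lt_eq b fun n hn => (truncate_of_lt N ω hn).symm
      _ ≤ (2 : ℝ)⁻¹ ^ N₁ := pow_le_pow_of_le_one (by norm_num) (by norm_num) (le_max_left _ _)
      _ < ε / 2 := hN₁
  have hsup := iSup_norm_prodChar_sub_truncate_le b (N := N) (ω := ω) (by positivity)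
    fun n hn => (hN₂ n (le_of_max_le_right hn)).le
  unfold prodRho
  linarith

/-- Let `(b n)` be a nondecreasing sequence of integers `≥ 2` tending to infinity. The direct
sum `G = ⨁ n, ℤ(b n)` — the set of finitely supported elements of `X = ∏ n, ℤ(b n)` — is
dense in `G_u = (s_u(X), ρ)`. -/
theorem directSum_dense_in_Gu
    (b : ℕ → ℕ) (hmono : Monotone b) (hb : ∀ n, 2 ≤ b n)
    (htends : Tendsto b atTop atTop) :
    ∀ ω ∈ sUX b, ∀ ε > (0 : ℝ), ∃ g : (n : ℕ) → ZMod (b n),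
      {n : ℕ | g n ≠ 0}.Finite ∧ prodRho b ω g < ε :=
  directSum_dense_in_Gu_general b
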